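/- Let λ, μ be compositions of n with last parts λ_l and μ_m satisfying 1 < μ_m < λ_l, and let μ' = (μ_1,...,μ_{m-1}, μ_m - 1, 1). Then the index [P_{λ|μ} : P_{λ|μ'}] equals 2^{μ_m} - 1. -/

import Mathlib

/-!
`P_{λ|μ}` acts on `F₂ⁿ` by matrix multiplication. Since `μ'` only splits the last coordinate
`p = n - 1` off as a block of its own, `P_{λ|μ'}` is the stabiliser of `e_p` in `P_{λ|μ}`, so the
index is the size of the orbit of `e_p`, i.e. the set of last columns of elements of `P_{λ|μ}`.
Such a column vanishes outside the last block of `μ`, of size `μ_m`. Conversely, as the last block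
of `λ` contains that of `μ`, every nonzero vector supported there is reached from `e_p` by one or
two matrices of the form "identity with one column replaced" lying in `P_{λ|μ}`. Hence the orbit
has `2 ^ μ_m - 1` elements.
-/

open Matrix

open Matrix

/-- Index of the block (w.r.t. the composition `l`) containing row/column `i`. -/
def blockIdx (l : List ℕ) (i : ℕ) : ℕ :=
  (List.range l.length).countP (fun k => (l.take (k + 1)).sum ≤ i)

/-- The submonoid of `GL n (F₂)` of matrices that are block upper triangular w.r.t. `l`
and block lower triangular w.r.t. `m`. -/
def paraPairM (n : ℕ) (l m : List ℕ) : Submonoid (GL (Fin n) (ZMod 2)) where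
  carrier := {g | (∀ i j : Fin n, blockIdx l j < blockIdx l i →
      (g : Matrix (Fin n) (Fin n) (ZMod 2)) i j = 0) ∧
    (∀ i j : Fin n, blockIdx m i < blockIdx m j →
      (g : Matrix (Fin n) (Fin n) (ZMod 2)) i j = 0)}
  one_mem' := by
    constructor <;> intro i j h <;>
    · have : i ≠ j := by rintro rfl; omega
      simp [Matrix.one_apply_ne this]
  mul_mem' := by
    rintro a b ⟨ha1, ha2⟩ ⟨hb1, hb2⟩
    constructor
    · intro i j h
      show ((a : Matrix (Fin n) (Fin n) (ZMod 2)) * b) i j = 0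
      rw [Matrix.mul_apply]
      apply Finset.sum_eq_zero
      intro k _
      rcases lt_or_ge (blockIdx l k) (blockIdx l i) with hk | hk
      · rw [ha1 i k hk, zero_mul]
      · rw [hb1 k j (lt_of_lt_of_le h hk), mul_zero]
    · intro i j h
      show ((a : Matrix (Fin n) (Fin n) (ZMod 2)) * b) i j = 0
      rw [Matrix.mul_apply]
      apply Finset.sum_eq_zero
      intro k _
      rcases lt_or_ge (blockIdx m i) (blockIdx m k) with hk | hk
      · rw [ha2 i k hk, zero_mul]
      · rw [hb2 k j (lt_of_le_of_lt hk h), mul_zero]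

/-- `P_{λ|μ} = P_λ ∩ (P_μ)ᵗ` as a subgroup of `GL n (F₂)`. -/
def paraPair (n : ℕ) (l m : List ℕ) : Subgroup (GL (Fin n) (ZMod 2)) where
  toSubmonoid := paraPairM n l m
  inv_mem' := by
    intro g hg
    have hord : g ^ orderOf g = 1 := pow_orderOf_eq_one g
    have hpos : 0 < orderOf g := orderOf_pos g
    have hinv : g⁻¹ = g ^ (orderOf g - 1) := by
      apply inv_eq_of_mul_eq_one_right
      rw [← pow_succ']
      have h1 : orderOf g - 1 + 1 = orderOf g := by omega
      rw [h1, hord]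
    rw [hinv]
    exact Submonoid.pow_mem _ hg _

/-- The standard parabolic subgroup `P_λ` of `GL n (F₂)`. -/
def para (n : ℕ) (l : List ℕ) : Subgroup (GL (Fin n) (ZMod 2)) := paraPair n l []

/-- The stopover set of a composition. -/
def stopovers (l : List ℕ) : Set ℕ :=
  {s | ∃ t, 0 < t ∧ t < l.length ∧ (l.take t).sum = s}

lemma blockIdx_le_length (X : List ℕ) (i : ℕ) : blockIdx X i ≤ X.length :=
  List.countP_le_length.trans_eq List.length_range

lemma blockIdx_of_sum_le (X : List ℕ) {i : ℕ} (h : X.sum ≤ i) : blockIdx X i = X.length := by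
  rw [blockIdx, List.countP_eq_length.mpr, List.length_range]
  intro k _
  have := (List.take_sublist (k + 1) X).sum_le_sum fun _ _ => Nat.zero_le _
  simp only [decide_eq_true_eq]
  omega

lemma blockIdx_append_singleton (X : List ℕ) (t i : ℕ) :
    blockIdx (X ++ [t]) i = blockIdx X i + if X.sum + t ≤ i then 1 else 0 := by
  unfold blockIdx
  rw [List.length_append, List.length_singleton, List.range_succ, List.countP_append]
  congr 1
  · apply List.countP_congr
    intro k hk
    rw [List.mem_range] at hk
    rw [List.take_append_of_le_length (by omega)]
  · simp [List.countP_cons, List.take_of_length_le]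

lemma blockIdx_append_singleton_of_lt {X : List ℕ} {t i : ℕ} (h : i < X.sum + t) :
    blockIdx (X ++ [t]) i = blockIdx X i := by
  rw [blockIdx_append_singleton, if_neg (by omega), add_zero]

lemma blockIdx_append_singleton_of_mem {X : List ℕ} {t i : ℕ} (h₁ : X.sum ≤ i)
    (h₂ : i < X.sum + t) : blockIdx (X ++ [t]) i = X.length := by
  rw [blockIdx_append_singleton_of_lt h₂, blockIdx_of_sum_le X h₁]

lemma blockIdx_lt_length (X : List ℕ) {i : ℕ} (h : i < X.sum) : blockIdx X i < X.length := by
  obtain ⟨Y, t, rfl⟩ := (List.eq_nil_or_concat' X).resolve_left (by rintro rfl; simp at h)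
  rw [List.sum_append, List.sum_singleton] at h
  rw [blockIdx_append_singleton_of_lt h, List.length_append, List.length_singleton]
  exact Nat.lt_succ_of_le (blockIdx_le_length Y i)

lemma blockIdx_append_pred_one {X : List ℕ} {t i : ℕ} (ht : 0 < t) (hi : i < X.sum + t) :
    blockIdx (X ++ [t - 1, 1]) i =
      blockIdx (X ++ [t]) i + if i = X.sum + t - 1 then 1 else 0 := by
  rw [show X ++ [t - 1, 1] = X ++ [t - 1] ++ [1] by simp, blockIdx_append_singleton,
    blockIdx_append_singleton, blockIdx_append_singleton, List.sum_append, List.sum_singleton]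
  split_ifs <;> omega

section ParaPair

variable {n : ℕ}

lemma mem_paraPair_iff {l m : List ℕ} {g : GL (Fin n) (ZMod 2)} :
    g ∈ paraPair n l m ↔
      (∀ i j : Fin n, blockIdx l j < blockIdx l i →
        (g : Matrix (Fin n) (Fin n) (ZMod 2)) i j = 0) ∧
      (∀ i j : Fin n, blockIdx m i < blockIdx m j →
        (g : Matrix (Fin n) (Fin n) (ZMod 2)) i j = 0) :=
  Iff.rfl

lemma mem_paraPair_of_offDiag {l m : List ℕ} {g : GL (Fin n) (ZMod 2)}
    (h : ∀ i j : Fin n, i ≠ j → (g : Matrix (Fin n) (Fin n) (ZMod 2)) i j ≠ 0 →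
      blockIdx l i = blockIdx l j ∧ blockIdx m i = blockIdx m j) :
    g ∈ paraPair n l m := by
  constructor <;>
  · intro i j hij
    by_contra hg
    have := h i j (by rintro rfl; omega) hg
    omega

end ParaPair

namespace Matrix

variable {ι K : Type*} [Fintype ι] [DecidableEq ι]

lemma det_updateCol_one [CommRing K] (j : ι) (w : ι → K) :
    ((1 : Matrix ι ι K).updateCol j w).det = w j := by
  have hw : (fun k => ∑ i, w i • (1 : Matrix ι ι K) k i) = w := by
    ext k
    simp [one_apply]
  have := det_updateCol_sum (1 : Matrix ι ι K) j w
  rwa [hw, det_one, smul_eq_mul, mul_one] at this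

lemma updateCol_one_mulVec [CommRing K] (j : ι) (w u : ι → K) :
    (1 : Matrix ι ι K).updateCol j w *ᵥ u = u + u j • (w - Pi.single j 1) := by
  ext i
  rw [mulVec, dotProduct, ← Finset.add_sum_erase _ _ (Finset.mem_univ j)]
  have hrest : ∑ k ∈ Finset.univ.erase j, (1 : Matrix ι ι K).updateCol j w i k * u k =
      if i = j then 0 else u i := by
    rw [Finset.sum_congr rfl fun k hk => by
      rw [updateCol_apply, if_neg (Finset.ne_of_mem_erase hk), one_apply, ite_mul, zero_mul]]
    simp [Finset.sum_ite_eq]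
  rw [hrest, updateCol_apply, if_pos rfl]
  simp only [Pi.add_apply, Pi.smul_apply, Pi.sub_apply, smul_eq_mul, Pi.single_apply]
  split_ifs with hij
  · rw [hij]
    ring
  · ring

namespace GeneralLinearGroup

lemma smul_single_one_apply [CommRing K] (g : GL ι K) (i j : ι) :
    (g • (Pi.single j 1 : ι → K)) i = (g : Matrix ι ι K) i j := by
  rw [Units.smul_def, smul_eq_mulVec, mulVec_single_one, col_apply]

variable [Field K]

noncomputable def updateColOne (j : ι) (w : ι → K) (hw : w j ≠ 0) : GL ι K :=
  mkOfDetNeZero _ ((det_updateCol_one j w).trans_ne hw)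

@[simp]
lemma updateColOne_val (j : ι) (w : ι → K) (hw : w j ≠ 0) :
    (updateColOne j w hw : Matrix ι ι K) = (1 : Matrix ι ι K).updateCol j w :=
  rfl

lemma updateColOne_smul (j : ι) (w : ι → K) (hw : w j ≠ 0) (u : ι → K) :
    updateColOne j w hw • u = u + u j • (w - Pi.single j 1) :=
  updateCol_one_mulVec j w u

lemma updateColOne_smul_single (j : ι) (w : ι → K) (hw : w j ≠ 0) :
    updateColOne j w hw • Pi.single j 1 = w := by
  simp [updateColOne_smul]

end GeneralLinearGroup

end Matrix

lemma ZMod.eq_one_of_ne_zero {x : ZMod 2} (hx : x ≠ 0) : x = 1 := by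
  revert x
  decide

lemma ZMod.eq_single_one_of_ne_zero {ι : Type*} [DecidableEq ι] {v : ι → ZMod 2} {j : ι}
    (hv : ∀ i ≠ j, v i = 0) (h0 : v ≠ 0) : v = Pi.single j 1 := by
  have hvj : v j = 1 := by
    have : v j ≠ 0 := fun h => h0 <| funext fun i => by
      by_cases hi : i = j
      · rw [hi, h, Pi.zero_apply]
      · exact hv i hi
    exact ZMod.eq_one_of_ne_zero this
  ext i
  by_cases hi : i = j
  · rw [hi, hvj, Pi.single_eq_same]
  · rw [hv i hi, Pi.single_eq_of_ne hi]

lemma ncard_setOf_forall_lt_eq_zero_and_ne_zero {R : Type*} [Fintype R] [Zero R] (n c : ℕ) :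
    {v : Fin n → R | (∀ i : Fin n, (i : ℕ) < c → v i = 0) ∧ v ≠ 0}.ncard =
      Fintype.card R ^ (n - c) - 1 := by
  have hS : {v : Fin n → R | (∀ i : Fin n, (i : ℕ) < c → v i = 0) ∧ v ≠ 0} =
      ↑(Fintype.piFinset fun i : Fin n => (if (i : ℕ) < c then {0} else Finset.univ : Finset R))
        \ {0} := by
    ext v
    simp only [Set.mem_ofPred_eq, Set.mem_sdiff, Finset.mem_coe, Fintype.mem_piFinset,
      Set.mem_singleton_iff]
    refine and_congr (forall_congr' fun i => ?_) Iff.rfl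
    split_ifs with hi <;> simp [hi]
  have h0 : (0 : Fin n → R) ∈ Fintype.piFinset fun i : Fin n =>
      (if (i : ℕ) < c then {0} else Finset.univ : Finset R) := by
    rw [Fintype.mem_piFinset]
    intro i
    split_ifs <;> simp
  rw [hS, Set.ncard_sdiff_singleton_of_mem h0, Set.ncard_coe_finset, Fintype.card_piFinset]
  have hcard : ({i : Fin n | c ≤ (i : ℕ)} : Finset (Fin n)).card = n - c := by
    have := Finset.card_filter_add_card_filter_not (s := Finset.univ)
      fun i : Fin n => (i : ℕ) < c
    simp only [Fin.card_filter_val_lt, not_lt, Finset.card_univ, Fintype.card_fin] at this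
    omega
  simp [apply_ite Finset.card, Finset.prod_ite, hcard]

section LastBlock

variable {n b : ℕ} {M : List ℕ}

lemma paraPair_apply_eq_zero_of_lt_sum {l : List ℕ} (hM : (M ++ [b]).sum = n)
    {g : GL (Fin n) (ZMod 2)} (hg : g ∈ paraPair n l (M ++ [b])) {i j : Fin n}
    (hi : (i : ℕ) < M.sum) (hj : M.sum ≤ j) : (g : Matrix (Fin n) (Fin n) (ZMod 2)) i j = 0 := by
  rw [List.sum_append, List.sum_singleton] at hM
  apply (mem_paraPair_iff.mp hg).2 i j
  rw [blockIdx_append_singleton_of_lt (by omega), blockIdx_append_singleton_of_mem hj (by omega)]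
  exact blockIdx_lt_length M hi

lemma stabilizer_single_last (l : List ℕ) (hM : (M ++ [b]).sum = n) (hb : 0 < b) (p : Fin n)
    (hp : (p : ℕ) + 1 = n) :
    MulAction.stabilizer (paraPair n l (M ++ [b])) (Pi.single p 1 : Fin n → ZMod 2) =
      (paraPair n l (M ++ [b - 1, 1])).subgroupOf (paraPair n l (M ++ [b])) := by
  rw [List.sum_append, List.sum_singleton] at hM
  have hsplit (i : Fin n) :
      blockIdx (M ++ [b - 1, 1]) i = blockIdx (M ++ [b]) i + if i = p then 1 else 0 := by
    rw [blockIdx_append_pred_one hb (by omega)]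
    simp only [Fin.ext_iff, show M.sum + b - 1 = p by omega]
  have hlast : blockIdx (M ++ [b]) p = M.length :=
    blockIdx_append_singleton_of_mem (by omega) (by omega)
  have hle (i : Fin n) : blockIdx (M ++ [b]) i ≤ M.length := by
    rw [blockIdx_append_singleton_of_lt (by omega)]
    exact blockIdx_le_length M i
  ext g
  rw [MulAction.mem_stabilizer_iff, Subgroup.mem_subgroupOf, Subgroup.smul_def]
  constructor
  · intro hfix
    refine ⟨(mem_paraPair_iff.mp g.2).1, fun i j hij => ?_⟩
    by_cases hj : j = p
    · subst hj
      have hi : i ≠ j := by rintro rfl; omega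
      rw [← GeneralLinearGroup.smul_single_one_apply, hfix, Pi.single_eq_of_ne hi]
    · rw [hsplit, hsplit, if_neg hj] at hij
      exact (mem_paraPair_iff.mp g.2).2 i j (by omega)
  · intro hg
    refine ZMod.eq_single_one_of_ne_zero (fun i hi => ?_) ((smul_ne_zero_iff_ne _).mpr (by simp))
    rw [GeneralLinearGroup.smul_single_one_apply]
    refine (mem_paraPair_iff.mp hg).2 i p ?_
    rw [hsplit, hsplit, if_pos rfl, if_neg hi, hlast]
    have := hle i
    omega

lemma blockIdx_of_mem_lastBlock {L : List ℕ} {a : ℕ} (hL : (L ++ [a]).sum = n)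
    (hM : (M ++ [b]).sum = n) (hba : b ≤ a) {i : ℕ} (hi₁ : M.sum ≤ i) (hi₂ : i < n) :
    blockIdx (L ++ [a]) i = L.length ∧ blockIdx (M ++ [b]) i = M.length := by
  rw [List.sum_append, List.sum_singleton] at hL hM
  exact ⟨blockIdx_append_singleton_of_mem (by omega) (by omega),
    blockIdx_append_singleton_of_mem hi₁ (by omega)⟩

lemma updateColOne_mem_paraPair {L : List ℕ} {a : ℕ} (hL : (L ++ [a]).sum = n)
    (hM : (M ++ [b]).sum = n) (hba : b ≤ a) {j : Fin n} (hj : M.sum ≤ j)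
    {w : Fin n → ZMod 2} (hw : ∀ i : Fin n, (i : ℕ) < M.sum → w i = 0) (hwj : w j ≠ 0) :
    GeneralLinearGroup.updateColOne j w hwj ∈ paraPair n (L ++ [a]) (M ++ [b]) := by
  refine mem_paraPair_of_offDiag fun i k hik hne => ?_
  rw [GeneralLinearGroup.updateColOne_val, updateCol_apply] at hne
  split_ifs at hne with hkj
  · have hi : M.sum ≤ i := by
      by_contra hi
      exact hne (hw i (by omega))
    obtain ⟨hiL, hiM⟩ := blockIdx_of_mem_lastBlock hL hM hba hi i.2
    obtain ⟨hkL, hkM⟩ := blockIdx_of_mem_lastBlock hL hM hba (hkj ▸ hj) k.2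
    exact ⟨hiL.trans hkL.symm, hiM.trans hkM.symm⟩
  · exact absurd (one_apply_ne hik) hne

lemma mem_orbit_single_last {L : List ℕ} {a : ℕ} (hL : (L ++ [a]).sum = n)
    (hM : (M ++ [b]).sum = n) (hba : b ≤ a) (hb : 0 < b) (p : Fin n) (hp : (p : ℕ) + 1 = n)
    {v : Fin n → ZMod 2} (hv : ∀ i : Fin n, (i : ℕ) < M.sum → v i = 0) (hv0 : v ≠ 0) :
    v ∈ MulAction.orbit (paraPair n (L ++ [a]) (M ++ [b])) (Pi.single p 1 : Fin n → ZMod 2) := by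
  have hpM : M.sum ≤ p := by
    rw [List.sum_append, List.sum_singleton] at hM
    omega
  have of_apply_ne_zero {w : Fin n → ZMod 2} (hw : ∀ i : Fin n, (i : ℕ) < M.sum → w i = 0)
      (hwp : w p ≠ 0) :
      w ∈ MulAction.orbit (paraPair n (L ++ [a]) (M ++ [b])) (Pi.single p 1 : Fin n → ZMod 2) :=
    ⟨⟨_, updateColOne_mem_paraPair hL hM hba hpM hw hwp⟩,
      GeneralLinearGroup.updateColOne_smul_single p w hwp⟩
  by_cases hvp : v p = 0
  swap
  · exact of_apply_ne_zero hv hvp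
  -- Reach `v + e_p` first, then cancel `e_p` by the column replacement `e_{i₀} ↦ e_{i₀} + e_p`.
  obtain ⟨i₀, hi₀⟩ := Function.ne_iff.mp hv0
  have hi₀p : i₀ ≠ p := by
    rintro rfl
    exact hi₀ hvp
  have hi₀M : M.sum ≤ i₀ := by
    by_contra h
    exact hi₀ (hv i₀ (by omega))
  have hu := of_apply_ne_zero (w := v + Pi.single p 1)
    (fun i hi => by simp [hv i hi, show i ≠ p by rintro rfl; omega])
    (by simp [hvp])
  set e : Fin n → ZMod 2 := Pi.single i₀ 1 + Pi.single p 1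
  have he₀ : e i₀ ≠ 0 := by simp [e, hi₀p]
  have he : ∀ i : Fin n, (i : ℕ) < M.sum → e i = 0 := fun i hi => by
    simp [e, show i ≠ i₀ by rintro rfl; omega, show i ≠ p by rintro rfl; omega]
  let g : paraPair n (L ++ [a]) (M ++ [b]) :=
    ⟨GeneralLinearGroup.updateColOne i₀ e he₀, updateColOne_mem_paraPair hL hM hba hi₀M he he₀⟩
  have hgu : g • (v + Pi.single p 1) = v := by
    rw [Subgroup.smul_def, GeneralLinearGroup.updateColOne_smul]
    simp [e, Pi.single_eq_of_ne hi₀p, ZMod.eq_one_of_ne_zero hi₀, add_assoc, ZModModule.add_self]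
  rw [← hgu, ← MulAction.orbit_eq_iff.mpr hu]
  exact MulAction.mem_orbit _ g

lemma orbit_single_last {L : List ℕ} {a : ℕ} (hL : (L ++ [a]).sum = n)
    (hM : (M ++ [b]).sum = n) (hba : b ≤ a) (hb : 0 < b) (p : Fin n) (hp : (p : ℕ) + 1 = n) :
    MulAction.orbit (paraPair n (L ++ [a]) (M ++ [b])) (Pi.single p 1 : Fin n → ZMod 2) =
      {v | (∀ i : Fin n, (i : ℕ) < M.sum → v i = 0) ∧ v ≠ 0} := by
  ext v
  constructor
  · rintro ⟨g, rfl⟩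
    dsimp only
    refine ⟨fun i hi => ?_, (smul_ne_zero_iff_ne g).mpr (by simp)⟩
    rw [Subgroup.smul_def, GeneralLinearGroup.smul_single_one_apply]
    have hpM : M.sum ≤ p := by
      rw [List.sum_append, List.sum_singleton] at hM
      omega
    exact paraPair_apply_eq_zero_of_lt_sum hM g.2 hi hpM
  · rintro ⟨hv, hv0⟩
    exact mem_orbit_single_last hL hM hba hb p hp hv hv0

end LastBlock

theorem stmt11_general (n a b : ℕ) (L M : List ℕ)
    (hLsum : (L ++ [a]).sum = n) (hMsum : (M ++ [b]).sum = n)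
    (h1 : 1 < b) (h2 : b < a) :
    (paraPair n (L ++ [a]) (M ++ [b - 1, 1])).relIndex (paraPair n (L ++ [a]) (M ++ [b])) =
      2 ^ b - 1 := by
  have hn : M.sum + b = n := by simpa using hMsum
  let p : Fin n := ⟨n - 1, by omega⟩
  have hp : (p : ℕ) + 1 = n := by simp only [p]; omega
  rw [Subgroup.relIndex, ← stabilizer_single_last _ hMsum (by omega) p hp,
    MulAction.index_stabilizer, orbit_single_last hLsum hMsum h2.le (by omega) p hp,
    ncard_setOf_forall_lt_eq_zero_and_ne_zero, ZMod.card, ← hn, Nat.add_sub_cancel_left]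

theorem stmt11 (n a b : ℕ) (L M : List ℕ)
    (hL : ∀ x ∈ L ++ [a], 0 < x) (hM : ∀ x ∈ M ++ [b], 0 < x)
    (hLsum : (L ++ [a]).sum = n) (hMsum : (M ++ [b]).sum = n)
    (h1 : 1 < b) (h2 : b < a) :
    (paraPair n (L ++ [a]) (M ++ [b - 1, 1])).relIndex (paraPair n (L ++ [a]) (M ++ [b])) =
      2 ^ b - 1 :=
  stmt11_general n a b L M hLsum hMsum h1 h2
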